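/- arXiv:2602.08702 — 2 statements merged into one kernel-verified Lean document; each statement's English description precedes it below -/
import Mathlib

section
/- Let N ≥ 2 and p > 1, and let ℝ^N_+ = {(x',x_N) ∈ ℝ^N : x_N > 0}. Suppose the weight W: closure(ℝ^N_+) → [0,∞) satisfies (W_0) and (W_1^+) on ℝ^N_+. Then for every u ∈ C_0^∞(ℝ^N_+) (smooth functions compactly supported in the open half-space) one has ∫_{ℝ^N_+} W_{x_N} |u|^p dx ≤ p^p ∫_{ℝ^N_+} (W^p / [W_{x_N}]^{p-1}) |∇u|^p dx. -/
open MeasureTheory Real Set Filter Topology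

noncomputable section

/-- The upper half-space `ℝ^N_+ = {(x', x_N) : x_N > 0}` in `ℝ^{N-1} × ℝ`. -/
def upperHalfSpace (n : ℕ) : Set ((Fin n → ℝ) × ℝ) := {x | 0 < x.2}

/-- `W'` is the weak partial derivative of `W` with respect to the last variable on `Ω`. -/
def IsWeakLastDerivOn {n : ℕ} (Ω : Set ((Fin n → ℝ) × ℝ))
    (W W' : ((Fin n → ℝ) × ℝ) → ℝ) : Prop :=
  ∀ φ : ((Fin n → ℝ) × ℝ) → ℝ, ContDiff ℝ (⊤ : ℕ∞) φ → HasCompactSupport φ → tsupport φ ⊆ Ω →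
    ∫ x in Ω, W x * deriv (fun t => φ (x.1, t)) x.2 = - ∫ x in Ω, W' x * φ x

/-- `Memℒp` from integrability of the `r`-th power of a nonnegative function. -/
lemma memLp_of_integrable_rpow {α : Type*} [MeasurableSpace α] {μ : Measure α}
    {f : α → ℝ} {r : ℝ} (hr : 0 < r) (hf : AEStronglyMeasurable f μ)
    (hf0 : 0 ≤ᵐ[μ] f) (hint : Integrable (fun x => f x ^ r) μ) :
    MemLp f (ENNReal.ofReal r) μ := by
  have hne : ENNReal.ofReal r ≠ 0 := by
    simp [ENNReal.ofReal_eq_zero, not_le, hr]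
  have hnt : ENNReal.ofReal r ≠ ⊤ := ENNReal.ofReal_ne_top
  have key := memLp_norm_rpow_iff (p := ENNReal.ofReal r) (q := ENNReal.ofReal r) hf hne hnt
  rw [ENNReal.div_self hne hnt, ENNReal.toReal_ofReal hr.le] at key
  rw [← key, memLp_one_iff_integrable]
  apply hint.congr
  filter_upwards [hf0] with x hx
  rw [Real.norm_of_nonneg hx]

set_option maxHeartbeats 1000000 in
/-- **Hardy inequality of type I on the upper half-space for functions supported in the
open half-space** (Corollary 3.1, second part). -/
theorem hardy_inequality_type_I_halfspace_compactly_supported {n : ℕ} (hn : 1 ≤ n)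
    (p : ℝ) (hp : 1 < p)
    (W W' : ((Fin n → ℝ) × ℝ) → ℝ)
    -- (W₀)
    (hWnonneg : ∀ x ∈ closure (upperHalfSpace n), 0 ≤ W x)
    (hWloc : LocallyIntegrableOn W (upperHalfSpace n))
    (hW'loc : LocallyIntegrableOn W' (upperHalfSpace n))
    (hweak : IsWeakLastDerivOn (upperHalfSpace n) W W')
    -- (W₁⁺)
    (hquotloc : LocallyIntegrableOn (fun x => W x ^ p / W' x ^ (p - 1)) (upperHalfSpace n))
    (hW'pos : ∀ᵐ x ∂(volume.restrict (upperHalfSpace n)), 0 < W' x)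
    -- `u ∈ C_0^∞(ℝ^N_+)`: smooth with compact support contained in the open half-space
    (u : ((Fin n → ℝ) × ℝ) → ℝ) (hu : ContDiff ℝ (⊤ : ℕ∞) u) (husupp : HasCompactSupport u)
    (hsupp : tsupport u ⊆ upperHalfSpace n) :
    ∫ x in upperHalfSpace n, W' x * |u x| ^ p
      ≤ p ^ p * ∫ x in upperHalfSpace n, (W x ^ p / W' x ^ (p - 1)) * ‖fderiv ℝ u x‖ ^ p := by
  have hp0 : (0:ℝ) < p := by linarith
  have hp1 : (0:ℝ) < p - 1 := by linarith
  set Ω : Set ((Fin n → ℝ) × ℝ) := upperHalfSpace n with hΩdef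
  set μ : Measure ((Fin n → ℝ) × ℝ) := volume.restrict Ω with hμdef
  set K : Set ((Fin n → ℝ) × ℝ) := tsupport u with hKdef
  have hKcomp : IsCompact K := husupp
  have hKΩ : K ⊆ Ω := hsupp
  have hKmeas : MeasurableSet K := hKcomp.isClosed.measurableSet
  have hΩmeas : MeasurableSet Ω := by
    exact (isOpen_lt continuous_const continuous_snd).measurableSet
  have hresK : μ.restrict K = volume.restrict K := by
    rw [hμdef, Measure.restrict_restrict hKmeas, inter_eq_self_of_subset_left hKΩ]
  have hWnn : ∀ x ∈ Ω, 0 ≤ W x := fun x hx => hWnonneg x (subset_closure hx)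
  -- bounds on u and its derivative
  obtain ⟨Cu, hCu⟩ := hu.continuous.bounded_above_of_compact_support husupp
  obtain ⟨CD, hCD⟩ :=
    (hu.continuous_fderiv (by simp)).bounded_above_of_compact_support (husupp.fderiv ℝ)
  have hCu0 : 0 ≤ Cu := le_trans (norm_nonneg _) (hCu 0)
  have hCD0 : 0 ≤ CD := le_trans (norm_nonneg _) (hCD 0)
  have hDu0 : ∀ x, x ∉ K → fderiv ℝ u x = 0 := by
    intro x hx
    by_contra h
    exact hx (support_fderiv_subset ℝ (f := u) h)
  have hu0 : ∀ x, x ∉ K → u x = 0 := by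
    intro x hx
    by_contra h
    exact hx (subset_closure h)
  -- the regularized approximations
  set ε : ℕ → ℝ := fun k => 1 / ((k : ℝ) + 1) with hεdef
  have hε0 : ∀ k, 0 < ε k := fun k => by positivity
  have hε1 : ∀ k, ε k ≤ 1 := by
    intro k
    rw [hεdef]
    rw [div_le_one (by positivity)]
    simp
  have hεlim : Tendsto ε atTop (𝓝 0) := tendsto_one_div_add_atTop_nhds_zero_nat
  set φ : ℕ → ((Fin n → ℝ) × ℝ) → ℝ :=
    fun k x => (u x ^ 2 + ε k ^ 2) ^ (p / 2) - ε k ^ p with hφdef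
  have hbase : ∀ k x, (0:ℝ) < u x ^ 2 + ε k ^ 2 := by
    intro k x
    have := hε0 k
    positivity
  -- smoothness of φ k
  have hφsmooth : ∀ k, ContDiff ℝ (⊤ : ℕ∞) (φ k) := by
    intro k
    have h1 : ContDiff ℝ (⊤ : ℕ∞) (fun x => u x ^ 2 + ε k ^ 2) :=
      (hu.pow 2).add contDiff_const
    rw [contDiff_iff_contDiffAt]
    intro x
    exact ((Real.contDiffAt_rpow_const_of_ne (hbase k x).ne').comp x h1.contDiffAt).sub
      contDiffAt_const
  -- support of φ k
  have hφsupp : ∀ k, Function.support (φ k) ⊆ Function.support u := by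
    intro k x hx
    simp only [Function.mem_support] at hx ⊢
    intro hux
    apply hx
    rw [hφdef]
    simp only [hux]
    norm_num
    rw [← Real.rpow_natCast (ε k) 2, ← Real.rpow_mul (hε0 k).le]
    norm_num
    rw [show 2 * (p / 2) = p by ring, sub_self]
  have hφts : ∀ k, tsupport (φ k) ⊆ Ω := by
    intro k
    exact (closure_minimal ((hφsupp k).trans subset_closure) (isClosed_tsupport u)).trans hsupp
  have hφcomp : ∀ k, HasCompactSupport (φ k) := fun k => husupp.mono (hφsupp k)
  have hφ0 : ∀ k x, x ∉ K → φ k x = 0 := by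
    intro k x hx
    by_contra h
    exact hx (subset_closure ((hφsupp k) h))
  -- the derivative identity
  have hderiv : ∀ k x, deriv (fun t => φ k (x.1, t)) x.2
      = p * (u x ^ 2 + ε k ^ 2) ^ (p / 2 - 1) * u x * (fderiv ℝ u x ((0 : Fin n → ℝ), (1:ℝ))) := by
    intro k x
    have hline : HasDerivAt (fun t : ℝ => ((x.1, t) : (Fin n → ℝ) × ℝ))
        (((0 : Fin n → ℝ), (1:ℝ))) x.2 :=
      (hasDerivAt_const x.2 x.1).prodMk (hasDerivAt_id x.2)
    have hux : HasDerivAt (fun t => u (x.1, t))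
        (fderiv ℝ u x ((0 : Fin n → ℝ), (1:ℝ))) x.2 := by
      have h0 := ((hu.differentiable (by simp) (x.1, x.2)).hasFDerivAt.comp_hasDerivAt x.2 hline)
      simpa [Function.comp_def] using h0
    have hsq : HasDerivAt (fun t => u (x.1, t) ^ 2 + ε k ^ 2)
        (2 * u (x.1, x.2) ^ 1 * (fderiv ℝ u x ((0 : Fin n → ℝ), (1:ℝ)))) x.2 := by
      simpa using ((hux.pow 2).add_const (ε k ^ 2))
    have hrpow := (hsq.rpow_const (p := p/2) (Or.inl (by
      have : (0:ℝ) < u (x.1, x.2) ^ 2 + ε k ^ 2 := hbase k (x.1, x.2)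
      exact this.ne')))
    have hfin := hrpow.sub_const (ε k ^ p)
    have : deriv (fun t => φ k (x.1, t)) x.2
        = 2 * u (x.1, x.2) ^ 1 * (fderiv ℝ u x ((0 : Fin n → ℝ), (1:ℝ))) * (p/2)
          * (u (x.1, x.2) ^ 2 + ε k ^ 2) ^ (p/2 - 1) := hfin.deriv
    rw [this]
    simp only [Prod.mk.eta]
    ring
  -- weak derivative identity applied to φ k
  have hEk : ∀ k, ∫ x, W' x * φ k x ∂μ
      = - ∫ x, W x * (p * (u x ^ 2 + ε k ^ 2) ^ (p / 2 - 1) * u x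
          * (fderiv ℝ u x ((0 : Fin n → ℝ), (1:ℝ)))) ∂μ := by
    intro k
    have h1 := hweak (φ k) (hφsmooth k) (hφcomp k) (hφts k)
    have h2 : (∫ x in Ω, W x * deriv (fun t => φ k (x.1, t)) x.2)
        = ∫ x in Ω, W x * (p * (u x ^ 2 + ε k ^ 2) ^ (p / 2 - 1) * u x
          * (fderiv ℝ u x ((0 : Fin n → ℝ), (1:ℝ)))) := by
      apply integral_congr_ae
      filter_upwards with x
      rw [hderiv k x]
    rw [hμdef]
    linarith [h1, h2]
  -- the pointwise dominating function for the first bound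
  set h : ℕ → ((Fin n → ℝ) × ℝ) → ℝ :=
    fun k x => p * W x * (u x ^ 2 + ε k ^ 2) ^ ((p - 1) / 2) * ‖fderiv ℝ u x‖ with hhdef
  have hWK : IntegrableOn W K volume := hWloc.integrableOn_compact_subset hKΩ hKcomp
  have hcontA : ∀ (k : ℕ) (r : ℝ), Continuous (fun x => (u x ^ 2 + ε k ^ 2) ^ r) := by
    intro k r
    exact ((hu.continuous.pow 2).add continuous_const).rpow_const
      (fun x => Or.inl (hbase k x).ne')
  have hAbound : ∀ k x, u x ^ 2 + ε k ^ 2 ≤ Cu ^ 2 + 1 := by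
    intro k x
    have h1 : u x ^ 2 ≤ Cu ^ 2 := by
      have := hCu x
      rw [Real.norm_eq_abs] at this
      nlinarith [abs_nonneg (u x), neg_abs_le (u x), le_abs_self (u x)]
    have h2 : ε k ^ 2 ≤ 1 := by nlinarith [hε0 k, hε1 k]
    linarith
  have hinth : ∀ k, Integrable (h k) μ := by
    intro k
    have heq : h k = K.indicator (h k) := by
      funext x
      by_cases hx : x ∈ K
      · rw [indicator_of_mem hx]
      · rw [indicator_of_notMem hx, hhdef]
        simp [hDu0 x hx]
    rw [heq]
    refine (integrable_indicator_iff hKmeas).2 ?_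
    rw [IntegrableOn, hresK]
    refine Integrable.mono' (g := fun x => (p * ((Cu ^ 2 + 1) ^ ((p-1)/2)) * CD) * |W x|)
      ((hWK.abs).const_mul _) ?_ ?_
    · exact ((aestronglyMeasurable_const.mul hWK.aestronglyMeasurable).mul
        ((hcontA k ((p-1)/2)).aestronglyMeasurable)).mul
        ((hu.continuous_fderiv (by simp)).norm.aestronglyMeasurable)
    · filter_upwards with x
      rw [hhdef, Real.norm_eq_abs]
      have hb := hbase k x
      have h1 : (u x ^ 2 + ε k ^ 2) ^ ((p-1)/2) ≤ (Cu ^ 2 + 1) ^ ((p-1)/2) :=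
        Real.rpow_le_rpow hb.le (hAbound k x) (by positivity)
      have h2 := hCD x
      have h3 : |p * W x * (u x ^ 2 + ε k ^ 2) ^ ((p-1)/2) * ‖fderiv ℝ u x‖|
          = p * |W x| * (u x ^ 2 + ε k ^ 2) ^ ((p-1)/2) * ‖fderiv ℝ u x‖ := by
        rw [abs_mul, abs_mul, abs_mul, abs_of_pos hp0,
          abs_of_nonneg (Real.rpow_nonneg hb.le _), abs_of_nonneg (norm_nonneg _)]
      rw [h3]
      have h4 : 0 ≤ (u x ^ 2 + ε k ^ 2) ^ ((p-1)/2) := Real.rpow_nonneg hb.le _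
      have h5 : (0:ℝ) ≤ (Cu ^ 2 + 1) ^ ((p-1)/2) := Real.rpow_nonneg (by positivity) _
      calc p * |W x| * (u x ^ 2 + ε k ^ 2) ^ ((p-1)/2) * ‖fderiv ℝ u x‖
          ≤ p * |W x| * ((Cu ^ 2 + 1) ^ ((p-1)/2)) * CD := by
            apply mul_le_mul
            · apply mul_le_mul_of_nonneg_left h1 (by positivity)
            · exact h2
            · exact norm_nonneg _
            · positivity
        _ = p * ((Cu ^ 2 + 1) ^ ((p-1)/2)) * CD * |W x| := by ring
  have hstep1 : ∀ k, ∫ x, W' x * φ k x ∂μ ≤ ∫ x, h k x ∂μ := by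
    intro k
    rw [hEk k]
    set D : ((Fin n → ℝ) × ℝ) → ℝ := fun x => W x * (p * (u x ^ 2 + ε k ^ 2) ^ (p / 2 - 1)
      * u x * (fderiv ℝ u x ((0 : Fin n → ℝ), (1:ℝ)))) with hDdef
    have habs : ∀ᵐ x ∂μ, |D x| ≤ h k x := by
      filter_upwards [ae_restrict_mem hΩmeas] with x hxΩ
      have hW : 0 ≤ W x := hWnn x hxΩ
      have hb := hbase k x
      have h1 : |u x| ≤ (u x ^ 2 + ε k ^ 2) ^ ((1:ℝ)/2) := by
        rw [← Real.sqrt_eq_rpow, ← Real.sqrt_sq_eq_abs]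
        exact Real.sqrt_le_sqrt (by nlinarith [sq_nonneg (ε k)])
      have h2 : |fderiv ℝ u x ((0 : Fin n → ℝ), (1:ℝ))| ≤ ‖fderiv ℝ u x‖ := by
        have hle := (fderiv ℝ u x).le_opNorm ((0 : Fin n → ℝ), (1:ℝ))
        have hnorm : ‖((0 : Fin n → ℝ), (1:ℝ))‖ = 1 := by
          simp [Prod.norm_def]
        rw [hnorm, mul_one, Real.norm_eq_abs] at hle
        exact hle
      have h3 : |D x| = W x * p * (u x ^ 2 + ε k ^ 2) ^ (p/2 - 1) * |u x|
          * |fderiv ℝ u x ((0 : Fin n → ℝ), (1:ℝ))| := by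
        rw [hDdef]
        simp only [abs_mul, abs_of_nonneg hW, abs_of_pos hp0,
          abs_of_nonneg (Real.rpow_nonneg hb.le (p/2-1))]
        ring
      rw [h3, hhdef]
      have h4 : (u x ^ 2 + ε k ^ 2) ^ (p/2 - 1) * (u x ^ 2 + ε k ^ 2) ^ ((1:ℝ)/2)
          = (u x ^ 2 + ε k ^ 2) ^ ((p-1)/2) := by
        rw [← Real.rpow_add hb]
        norm_num
        ring_nf
      calc W x * p * (u x ^ 2 + ε k ^ 2) ^ (p/2 - 1) * |u x|
            * |fderiv ℝ u x ((0 : Fin n → ℝ), (1:ℝ))|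
          ≤ W x * p * (u x ^ 2 + ε k ^ 2) ^ (p/2 - 1) * ((u x ^ 2 + ε k ^ 2) ^ ((1:ℝ)/2))
            * ‖fderiv ℝ u x‖ := by
            apply mul_le_mul
            · apply mul_le_mul_of_nonneg_left h1
              positivity
            · exact h2
            · exact abs_nonneg _
            · positivity
        _ = p * W x * ((u x ^ 2 + ε k ^ 2) ^ (p/2 - 1) * (u x ^ 2 + ε k ^ 2) ^ ((1:ℝ)/2))
            * ‖fderiv ℝ u x‖ := by ring
        _ = p * W x * (u x ^ 2 + ε k ^ 2) ^ ((p-1)/2) * ‖fderiv ℝ u x‖ := by rw [h4]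
    calc - ∫ x, D x ∂μ ≤ |∫ x, D x ∂μ| := neg_le_abs _
      _ ≤ ∫ x, |D x| ∂μ := by
          have := norm_integral_le_integral_norm (μ := μ) D
          simpa [Real.norm_eq_abs] using this
      _ ≤ ∫ x, h k x ∂μ :=
          integral_mono_of_nonneg (Eventually.of_forall fun x => abs_nonneg _) (hinth k) habs
  -- Hölder step
  set q : ℝ := p / (p - 1) with hqdef
  have hpq : Real.HolderConjugate q p := by
    rw [Real.holderConjugate_iff]
    constructor
    · rw [hqdef]
      rw [lt_div_iff₀ hp1]
      linarith
    · rw [hqdef]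
      field_simp
      ring
  set B : ℝ := ∫ x, (W x ^ p / W' x ^ (p - 1)) * ‖fderiv ℝ u x‖ ^ p ∂μ with hBdef
  set C : ℕ → ℝ := fun k =>
    ∫ x, K.indicator (fun x => W' x * (u x ^ 2 + ε k ^ 2) ^ (p / 2)) x ∂μ with hCdef
  have hW'K : IntegrableOn W' K volume := hW'loc.integrableOn_compact_subset hKΩ hKcomp
  have hQK : IntegrableOn (fun x => W x ^ p / W' x ^ (p - 1)) K volume :=
    hquotloc.integrableOn_compact_subset hKΩ hKcomp
  have hW'aesm : AEStronglyMeasurable W' μ := hW'loc.aestronglyMeasurable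
  have hWaesm : AEStronglyMeasurable W μ := hWloc.aestronglyMeasurable
  have hindint : ∀ (V c : ((Fin n → ℝ) × ℝ) → ℝ) (M : ℝ), IntegrableOn V K volume →
      Continuous c → (∀ x, |c x| ≤ M) →
      Integrable (K.indicator (fun x => V x * c x)) μ := by
    intro V c M hV hc hM
    refine (integrable_indicator_iff hKmeas).2 ?_
    rw [IntegrableOn, hresK]
    refine Integrable.mono' (g := fun x => M * |V x|) ((hV.abs).const_mul _) ?_ ?_
    · exact hV.aestronglyMeasurable.mul hc.aestronglyMeasurable
    · filter_upwards with x
      rw [Real.norm_eq_abs, abs_mul]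
      calc |V x| * |c x| ≤ |V x| * M := mul_le_mul_of_nonneg_left (hM x) (abs_nonneg _)
        _ = M * |V x| := mul_comm _ _
  have hstep2 : ∀ k, ∫ x, h k x ∂μ ≤ p * (C k) ^ (1 / q) * B ^ (1 / p) := by
    intro k
    set a : ℝ := (p - 1) / p with hadef
    set f : ((Fin n → ℝ) × ℝ) → ℝ :=
      K.indicator (fun x => W' x ^ a * (u x ^ 2 + ε k ^ 2) ^ ((p - 1) / 2)) with hfdef
    set g : ((Fin n → ℝ) × ℝ) → ℝ :=
      K.indicator (fun x => W x / W' x ^ a * ‖fderiv ℝ u x‖) with hgdef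
    have hq0 : (0:ℝ) < q := hpq.pos
    have hf0 : 0 ≤ᵐ[μ] f := by
      filter_upwards [hW'pos] with x hx
      rw [hfdef]
      by_cases hxK : x ∈ K
      · rw [indicator_of_mem hxK]
        have := hbase k x
        positivity
      · rw [indicator_of_notMem hxK]
        simp
    have hg0 : 0 ≤ᵐ[μ] g := by
      filter_upwards [hW'pos, ae_restrict_mem hΩmeas] with x hx hxΩ
      rw [hgdef]
      by_cases hxK : x ∈ K
      · rw [indicator_of_mem hxK]
        have h1 := hWnn x hxΩ
        have h2 : (0:ℝ) < W' x ^ a := Real.rpow_pos_of_pos hx a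
        positivity
      · rw [indicator_of_notMem hxK]
        simp
    have hfmeas : AEStronglyMeasurable f μ := by
      rw [hfdef]
      exact (((hW'aesm.aemeasurable.pow aemeasurable_const).aestronglyMeasurable).mul
        ((hcontA k ((p-1)/2)).aestronglyMeasurable)).indicator hKmeas
    have hgmeas : AEStronglyMeasurable g μ := by
      rw [hgdef]
      exact (((hWaesm.aemeasurable.div
        (hW'aesm.aemeasurable.pow aemeasurable_const)).aestronglyMeasurable).mul
        ((hu.continuous_fderiv (by simp)).norm.aestronglyMeasurable)).indicator hKmeas
    have hfq : (fun x => f x ^ q)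
        =ᵐ[μ] K.indicator (fun x => W' x * (u x ^ 2 + ε k ^ 2) ^ (p / 2)) := by
      filter_upwards [hW'pos] with x hx
      rw [hfdef]
      by_cases hxK : x ∈ K
      · rw [indicator_of_mem hxK, indicator_of_mem hxK]
        have hb := hbase k x
        rw [Real.mul_rpow (Real.rpow_nonneg hx.le a) (Real.rpow_nonneg hb.le _),
          ← Real.rpow_mul hx.le, ← Real.rpow_mul hb.le,
          show a * q = 1 by rw [hadef, hqdef]; field_simp,
          show (p-1)/2 * q = p / 2 by rw [hqdef]; field_simp,
          Real.rpow_one]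
      · rw [indicator_of_notMem hxK, indicator_of_notMem hxK,
          Real.zero_rpow (ne_of_gt hq0)]
    have hgq : (fun x => g x ^ p)
        =ᵐ[μ] K.indicator (fun x => (W x ^ p / W' x ^ (p - 1)) * ‖fderiv ℝ u x‖ ^ p) := by
      filter_upwards [hW'pos, ae_restrict_mem hΩmeas] with x hx hxΩ
      rw [hgdef]
      by_cases hxK : x ∈ K
      · rw [indicator_of_mem hxK, indicator_of_mem hxK]
        have h1 := hWnn x hxΩ
        have h2 : (0:ℝ) < W' x ^ a := Real.rpow_pos_of_pos hx a
        rw [Real.mul_rpow (by positivity) (norm_nonneg _),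
          Real.div_rpow h1 (le_of_lt h2), ← Real.rpow_mul hx.le,
          show a * p = p - 1 by rw [hadef]; field_simp]
      · rw [indicator_of_notMem hxK, indicator_of_notMem hxK,
          Real.zero_rpow (ne_of_gt hp0)]
    have hintfq : Integrable (fun x => f x ^ q) μ := by
      refine (hindint W' (fun x => (u x ^ 2 + ε k ^ 2) ^ (p / 2)) ((Cu ^ 2 + 1) ^ (p / 2))
        hW'K (hcontA k (p/2)) ?_).congr hfq.symm
      intro x
      rw [abs_of_nonneg (Real.rpow_nonneg (hbase k x).le _)]
      exact Real.rpow_le_rpow (hbase k x).le (hAbound k x) (by positivity)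
    have hintgp : Integrable (fun x => g x ^ p) μ := by
      refine (hindint (fun x => W x ^ p / W' x ^ (p - 1)) (fun x => ‖fderiv ℝ u x‖ ^ p)
        (CD ^ p) hQK (((hu.continuous_fderiv (by simp)).norm).rpow_const
          (fun x => Or.inr hp0.le)) ?_).congr hgq.symm
      intro x
      rw [abs_of_nonneg (Real.rpow_nonneg (norm_nonneg _) _)]
      exact Real.rpow_le_rpow (norm_nonneg _) (hCD x) hp0.le
    have hmemf : MemLp f (ENNReal.ofReal q) μ :=
      memLp_of_integrable_rpow hq0 hfmeas hf0 hintfq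
    have hmemg : MemLp g (ENNReal.ofReal p) μ :=
      memLp_of_integrable_rpow hp0 hgmeas hg0 hintgp
    have hH := integral_mul_le_Lp_mul_Lq_of_nonneg hpq hf0 hg0 hmemf hmemg
    have hfg : ∀ᵐ x ∂μ, h k x = p * (f x * g x) := by
      filter_upwards [hW'pos] with x hx
      rw [hhdef, hfdef, hgdef]
      by_cases hxK : x ∈ K
      · rw [indicator_of_mem hxK, indicator_of_mem hxK]
        have h2 : (0:ℝ) < W' x ^ a := Real.rpow_pos_of_pos hx a
        field_simp
      · rw [indicator_of_notMem hxK, indicator_of_notMem hxK]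
        simp [hDu0 x hxK]
    have e1 : ∫ x, h k x ∂μ = p * ∫ x, f x * g x ∂μ := by
      rw [← integral_const_mul]
      exact integral_congr_ae hfg
    have e2 : ∫ x, f x ^ q ∂μ = C k := (integral_congr_ae hfq).trans rfl
    have e3 : ∫ x, g x ^ p ∂μ = B := by
      rw [hBdef]
      refine (integral_congr_ae hgq).trans ?_
      apply integral_congr_ae
      filter_upwards with x
      by_cases hxK : x ∈ K
      · rw [indicator_of_mem hxK]
      · rw [indicator_of_notMem hxK, hDu0 x hxK]
        simp [Real.zero_rpow (ne_of_gt hp0)]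
    rw [e1]
    calc p * ∫ x, f x * g x ∂μ
        ≤ p * ((∫ x, f x ^ q ∂μ) ^ (1/q) * (∫ x, g x ^ p ∂μ) ^ (1/p)) := by
          exact mul_le_mul_of_nonneg_left hH hp0.le
      _ = p * (C k) ^ (1/q) * B ^ (1/p) := by rw [e2, e3]; ring
  -- limits
  set A : ℝ := ∫ x, W' x * |u x| ^ p ∂μ with hAdef
  set M : ℝ := (Cu ^ 2 + 1) ^ (p / 2) + 1 with hMdef
  have hbnd_int : Integrable (K.indicator (fun x => |W' x| * M)) μ := by
    refine (integrable_indicator_iff hKmeas).2 ?_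
    rw [IntegrableOn, hresK]
    exact hW'K.abs.mul_const M
  have hφbound : ∀ k x, |(u x ^ 2 + ε k ^ 2) ^ (p / 2)| ≤ M := by
    intro k x
    rw [hMdef, abs_of_nonneg (Real.rpow_nonneg (hbase k x).le _)]
    have h1 : (u x ^ 2 + ε k ^ 2) ^ (p / 2) ≤ (Cu ^ 2 + 1) ^ (p / 2) :=
      Real.rpow_le_rpow (hbase k x).le (hAbound k x) (by positivity)
    linarith
  have hrlim : ∀ x, Tendsto (fun k => (u x ^ 2 + ε k ^ 2) ^ (p / 2)) atTop
      (𝓝 (|u x| ^ p)) := by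
    intro x
    have t1 : Tendsto (fun k => u x ^ 2 + ε k ^ 2) atTop (𝓝 (u x ^ 2)) := by
      have h1 : Tendsto (fun _ : ℕ => u x ^ 2) atTop (𝓝 (u x ^ 2)) := tendsto_const_nhds
      have h2 : Tendsto (fun k => ε k ^ 2) atTop (𝓝 0) := by
        simpa using hεlim.pow 2
      simpa using h1.add h2
    have t2 := t1.rpow_const (p := p / 2) (Or.inr (by positivity))
    have h3 : (u x ^ 2) ^ (p / 2) = |u x| ^ p := by
      rw [← sq_abs, ← Real.rpow_natCast |u x| 2, ← Real.rpow_mul (abs_nonneg _)]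
      norm_num
      rw [show 2 * (p / 2) = p by ring]
    rwa [h3] at t2
  have hεplim : Tendsto (fun k => ε k ^ p) atTop (𝓝 0) := by
    have := hεlim.rpow_const (p := p) (Or.inr hp0.le)
    rwa [Real.zero_rpow (ne_of_gt hp0)] at this
  have hAlim : Tendsto (fun k => ∫ x, W' x * φ k x ∂μ) atTop (𝓝 A) := by
    rw [hAdef]
    apply tendsto_integral_of_dominated_convergence (K.indicator (fun x => |W' x| * M))
    · intro k
      exact hW'aesm.mul ((hφsmooth k).continuous.aestronglyMeasurable)
    · exact hbnd_int
    · intro k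
      filter_upwards with x
      by_cases hxK : x ∈ K
      · rw [indicator_of_mem hxK, Real.norm_eq_abs, abs_mul]
        refine mul_le_mul_of_nonneg_left ?_ (abs_nonneg _)
        rw [hφdef]
        calc |(u x ^ 2 + ε k ^ 2) ^ (p / 2) - ε k ^ p|
            ≤ |(u x ^ 2 + ε k ^ 2) ^ (p / 2)| + |ε k ^ p| := abs_sub _ _
          _ ≤ ((Cu ^ 2 + 1) ^ (p / 2)) + 1 := by
              have h1 := hφbound k x
              rw [hMdef] at h1
              have h2 : |ε k ^ p| ≤ 1 := by
                rw [abs_of_nonneg (Real.rpow_nonneg (hε0 k).le _)]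
                exact Real.rpow_le_one (hε0 k).le (hε1 k) hp0.le
              have h3 : |(u x ^ 2 + ε k ^ 2) ^ (p / 2)| ≤ (Cu ^ 2 + 1) ^ (p / 2) := by
                rw [abs_of_nonneg (Real.rpow_nonneg (hbase k x).le _)]
                exact Real.rpow_le_rpow (hbase k x).le (hAbound k x) (by positivity)
              linarith
          _ = M := hMdef.symm
      · rw [indicator_of_notMem hxK, hφ0 k x hxK]
        simp
    · filter_upwards with x
      have := (hrlim x).sub hεplim
      rw [sub_zero] at this
      exact this.const_mul (W' x)
  have hClim : Tendsto C atTop (𝓝 A) := by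
    have key : Tendsto C atTop (𝓝 (∫ x, K.indicator (fun x => W' x * |u x| ^ p) x ∂μ)) := by
      rw [hCdef]
      apply tendsto_integral_of_dominated_convergence (K.indicator (fun x => |W' x| * M))
      · intro k
        exact (hW'aesm.mul (hcontA k (p/2)).aestronglyMeasurable).indicator hKmeas
      · exact hbnd_int
      · intro k
        filter_upwards with x
        by_cases hxK : x ∈ K
        · rw [indicator_of_mem hxK, indicator_of_mem hxK, Real.norm_eq_abs, abs_mul]
          exact mul_le_mul_of_nonneg_left (hφbound k x) (abs_nonneg _)
        · rw [indicator_of_notMem hxK, indicator_of_notMem hxK]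
          simp
      · filter_upwards with x
        by_cases hxK : x ∈ K
        · simp only [indicator_of_mem hxK]
          exact (hrlim x).const_mul (W' x)
        · simp only [indicator_of_notMem hxK]
          exact tendsto_const_nhds
    have heq : ∫ x, K.indicator (fun x => W' x * |u x| ^ p) x ∂μ = A := by
      rw [hAdef]
      apply integral_congr_ae
      filter_upwards with x
      by_cases hxK : x ∈ K
      · rw [indicator_of_mem hxK]
      · rw [indicator_of_notMem hxK, hu0 x hxK]
        simp [Real.zero_rpow (ne_of_gt hp0)]
    rwa [heq] at key
  have hA0 : 0 ≤ A := by
    rw [hAdef]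
    apply integral_nonneg_of_ae
    filter_upwards [hW'pos] with x hx
    positivity
  have hB0 : 0 ≤ B := by
    rw [hBdef, hμdef]
    apply integral_nonneg_of_ae
    filter_upwards [hW'pos, ae_restrict_mem hΩmeas] with x hx hxΩ
    have h1 : 0 ≤ W x := hWnn x hxΩ
    positivity
  -- pass to the limit
  have hkey : A ≤ p * A ^ (1 / q) * B ^ (1 / p) := by
    refine le_of_tendsto_of_tendsto' hAlim ?_ (fun k => (hstep1 k).trans (hstep2 k))
    have h1 : Tendsto (fun k => (C k) ^ (1/q)) atTop (𝓝 (A ^ (1/q))) :=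
      hClim.rpow_const (Or.inr (by positivity))
    exact ((h1.const_mul p).mul tendsto_const_nhds)
  -- final algebra
  have hfinal : A ≤ p ^ p * B := by
    rcases le_or_gt A 0 with hA | hA
    · calc A ≤ 0 := hA
        _ ≤ p ^ p * B := by positivity
    · have hq1 : 1 / q = (p-1)/p := by rw [hqdef]; field_simp
      have hsplit : A = A ^ ((p-1)/p) * A ^ (1/p) := by
        rw [← Real.rpow_add hA, show (p-1)/p + 1/p = 1 by field_simp; ring, Real.rpow_one]
      have hApow : 0 < A ^ ((p-1)/p) := Real.rpow_pos_of_pos hA _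
      have h2 : A ^ ((p-1)/p) * A ^ (1/p) ≤ A ^ ((p-1)/p) * (p * B ^ (1/p)) := by
        calc A ^ ((p-1)/p) * A ^ (1/p) = A := hsplit.symm
          _ ≤ p * A ^ (1/q) * B ^ (1/p) := hkey
          _ = A ^ ((p-1)/p) * (p * B ^ (1/p)) := by rw [hq1]; ring
      have h3 : A ^ (1/p) ≤ p * B ^ (1/p) := le_of_mul_le_mul_left h2 hApow
      have h4 : (A ^ (1/p)) ^ p ≤ (p * B ^ (1/p)) ^ p := by
        apply Real.rpow_le_rpow (by positivity) h3 hp0.le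
      have h5 : (A ^ (1/p)) ^ p = A := by
        rw [← Real.rpow_mul hA0, one_div_mul_cancel (ne_of_gt hp0), Real.rpow_one]
      have h6 : (p * B ^ (1/p)) ^ p = p ^ p * B := by
        rw [Real.mul_rpow hp0.le (Real.rpow_nonneg hB0 _), ← Real.rpow_mul hB0,
          one_div_mul_cancel (ne_of_gt hp0), Real.rpow_one]
      rw [h5, h6] at h4
      exact h4
  exact hfinal
end
end

section
/- Let N ≥ 2, p > 1, and γ > p − 1. Then for every u ∈ C_0^∞(ℝ^N) one has |(γ − p + 1)/p|^p ∫_{ℝ^N_+} |u|^p / x_N^{p−γ} dx ≤ ∫_{ℝ^N_+} x_N^γ |∇u|^p dx, where ℝ^N_+ = {(x',x_N) ∈ ℝ^N : x_N > 0}. -/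
open MeasureTheory Real Set

noncomputable section

section Aux

open Filter Topology

/-- `x ↦ x ^ c` (real power) is measurable. -/
lemma measurable_rpow_const' (c : ℝ) : Measurable fun x : ℝ => x ^ c :=
  measurable_of_continuousOn_compl_singleton 0 fun x hx =>
    (Real.continuousAt_rpow_const x c (Or.inl hx)).continuousWithinAt

/-- Integrability on `(0,∞)` of a function vanishing beyond `T` and dominated by
`C * t ^ r` with `r > -1` near `0`. -/
lemma integrableOn_Ioi_of_bound {f : ℝ → ℝ}
    (hm : AEStronglyMeasurable f (volume.restrict (Ioi 0)))
    {T C r : ℝ} (hr : -1 < r) (h0 : ∀ t, T < t → f t = 0)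
    (hb : ∀ t, t ∈ Ioc 0 T → |f t| ≤ C * t ^ r) :
    IntegrableOn f (Ioi 0) := by
  rcases le_or_gt T 0 with hT | hT
  · have h : EqOn f 0 (Ioi 0) := fun t ht => h0 t (lt_of_le_of_lt hT ht)
    exact (integrableOn_congr_fun h measurableSet_Ioi).mpr (integrableOn_zero)
  · have hsplit : Ioi (0:ℝ) = Ioc 0 T ∪ Ioi T := (Ioc_union_Ioi_eq_Ioi hT.le).symm
    rw [hsplit]
    apply IntegrableOn.union
    · have hrpow : IntegrableOn (fun t => C * t ^ r) (Ioc 0 T) := by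
        have h1 := intervalIntegral.intervalIntegrable_rpow' (a := 0) (b := T) hr
        rw [intervalIntegrable_iff_integrableOn_Ioc_of_le hT.le] at h1
        exact h1.const_mul C
      refine Integrable.mono' hrpow
        (hm.mono_measure (Measure.restrict_mono Ioc_subset_Ioi_self le_rfl)) ?_
      filter_upwards [ae_restrict_mem measurableSet_Ioc] with t ht
      simpa [Real.norm_eq_abs] using hb t ht
    · have h : EqOn f 0 (Ioi T) := fun t ht => h0 t ht
      exact (integrableOn_congr_fun h measurableSet_Ioi).mpr integrableOn_zero

variable {p γ : ℝ}

section OneDim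

variable {v : ℝ → ℝ}

/-- Beyond the support: `v` and `deriv v` vanish for large `t`. -/
lemma exists_bounds (hv : ContDiff ℝ (⊤ : ℕ∞) v) (hsv : HasCompactSupport v) :
    ∃ T M, 0 < T ∧ 0 ≤ M ∧ (∀ t, T < t → v t = 0 ∧ deriv v t = 0) ∧
      (∀ t, |v t| ≤ M ∧ |deriv v t| ≤ M) := by
  obtain ⟨T0, hT0⟩ := hsv.isBounded.bddAbove
  obtain ⟨M1, hM1⟩ := hsv.exists_bound_of_continuous hv.continuous
  obtain ⟨M2, hM2⟩ := (hsv.deriv).exists_bound_of_continuous (hv.continuous_deriv (by simp))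
  refine ⟨max T0 1, max M1 M2, lt_of_lt_of_le one_pos (le_max_right _ _), ?_, ?_, ?_⟩
  · exact le_trans (abs_nonneg (v 0)) (le_trans (le_of_eq (Real.norm_eq_abs _).symm)
      (le_trans (hM1 0) (le_max_left _ _)))
  · intro t ht
    have htsupp : t ∉ tsupport v := by
      intro hmem
      exact absurd (le_trans (hT0 hmem) (le_max_left _ _)) (not_le.mpr ht)
    constructor
    · exact image_eq_zero_of_notMem_tsupport htsupp
    · have hev : v =ᶠ[𝓝 t] 0 := notMem_tsupport_iff_eventuallyEq.mp htsupp
      rw [hev.deriv_eq]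
      exact deriv_const t 0
  · intro t
    exact ⟨le_trans (le_trans (le_of_eq (Real.norm_eq_abs _).symm) (hM1 t)) (le_max_left _ _),
      le_trans (le_trans (le_of_eq (Real.norm_eq_abs _).symm) (hM2 t)) (le_max_right _ _)⟩

lemma integrableOn_L1 (hp : 1 < p) (hγ : p - 1 < γ)
    (hv : ContDiff ℝ (⊤ : ℕ∞) v) (hsv : HasCompactSupport v) :
    IntegrableOn (fun t => |v t| ^ p * t ^ (γ - p)) (Ioi 0) := by
  have hp0 : (0:ℝ) < p := lt_trans one_pos hp
  obtain ⟨T, M, hT, hM, hzero, hbd⟩ := exists_bounds hv hsv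
  refine integrableOn_Ioi_of_bound (T := T) (C := M ^ p) (r := γ - p) ?_ (by linarith) ?_ ?_
  · exact (((measurable_rpow_const' p).comp hv.continuous.abs.measurable).mul
      (measurable_rpow_const' (γ - p))).aestronglyMeasurable
  · intro t ht
    rw [(hzero t ht).1, abs_zero, Real.zero_rpow hp0.ne', zero_mul]
  · intro t ht
    have ht0 : (0:ℝ) < t := ht.1
    have h1 : |v t| ^ p ≤ M ^ p := Real.rpow_le_rpow (abs_nonneg _) (hbd t).1 hp0.le
    have h2 : (0:ℝ) ≤ t ^ (γ - p) := Real.rpow_nonneg ht0.le _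
    calc |(|v t| ^ p * t ^ (γ - p))| = |v t| ^ p * t ^ (γ - p) := by
          rw [abs_of_nonneg (mul_nonneg (Real.rpow_nonneg (abs_nonneg _) _) h2)]
      _ ≤ M ^ p * t ^ (γ - p) := mul_le_mul_of_nonneg_right h1 h2

lemma integrableOn_L2 (hp : 1 < p) (hγ : p - 1 < γ)
    (hv : ContDiff ℝ (⊤ : ℕ∞) v) (hsv : HasCompactSupport v) :
    IntegrableOn (fun t => t ^ γ * |deriv v t| ^ p) (Ioi 0) := by
  have hp0 : (0:ℝ) < p := lt_trans one_pos hp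
  obtain ⟨T, M, hT, hM, hzero, hbd⟩ := exists_bounds hv hsv
  refine integrableOn_Ioi_of_bound (T := T) (C := M ^ p) (r := γ) ?_ (by linarith) ?_ ?_
  · exact ((measurable_rpow_const' γ).mul ((measurable_rpow_const' p).comp
      ((hv.continuous_deriv (by simp)).abs.measurable))).aestronglyMeasurable
  · intro t ht
    rw [(hzero t ht).2, abs_zero, Real.zero_rpow hp0.ne', mul_zero]
  · intro t ht
    have ht0 : (0:ℝ) < t := ht.1
    have h1 : |deriv v t| ^ p ≤ M ^ p := Real.rpow_le_rpow (abs_nonneg _) (hbd t).2 hp0.le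
    have h2 : (0:ℝ) ≤ t ^ γ := Real.rpow_nonneg ht0.le _
    calc |(t ^ γ * |deriv v t| ^ p)|
        = t ^ γ * |deriv v t| ^ p := by
          rw [abs_of_nonneg (mul_nonneg h2 (Real.rpow_nonneg (abs_nonneg _) _))]
      _ ≤ t ^ γ * M ^ p := mul_le_mul_of_nonneg_left h1 h2
      _ = M ^ p * t ^ γ := mul_comm _ _

lemma integrableOn_mid (hp : 1 < p) (hγ : p - 1 < γ)
    (hv : ContDiff ℝ (⊤ : ℕ∞) v) (hsv : HasCompactSupport v) :
    IntegrableOn (fun t => t ^ (γ - p + 1) * (|v t| ^ (p - 1) * |deriv v t|)) (Ioi 0) := by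
  have hp0 : (0:ℝ) < p := lt_trans one_pos hp
  obtain ⟨T, M, hT, hM, hzero, hbd⟩ := exists_bounds hv hsv
  refine integrableOn_Ioi_of_bound (T := T) (C := M ^ (p - 1) * M) (r := γ - p + 1)
      ?_ (by linarith) ?_ ?_
  · exact ((measurable_rpow_const' (γ - p + 1)).mul
      ((((measurable_rpow_const' (p-1)).comp hv.continuous.abs.measurable)).mul
        ((hv.continuous_deriv (by simp)).abs.measurable))).aestronglyMeasurable
  · intro t ht
    rw [(hzero t ht).2, abs_zero, mul_zero, mul_zero]
  · intro t ht
    have ht0 : (0:ℝ) < t := ht.1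
    have h2 : (0:ℝ) ≤ t ^ (γ - p + 1) := Real.rpow_nonneg ht0.le _
    have h1 : |v t| ^ (p - 1) * |deriv v t| ≤ M ^ (p - 1) * M :=
      mul_le_mul (Real.rpow_le_rpow (abs_nonneg _) (hbd t).1 (by linarith))
        (hbd t).2 (abs_nonneg _) (Real.rpow_nonneg hM _)
    calc |(t ^ (γ - p + 1) * (|v t| ^ (p - 1) * |deriv v t|))|
        = t ^ (γ - p + 1) * (|v t| ^ (p - 1) * |deriv v t|) := by
          rw [abs_of_nonneg (mul_nonneg h2 (mul_nonneg (Real.rpow_nonneg (abs_nonneg _) _)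
            (abs_nonneg _)))]
      _ ≤ t ^ (γ - p + 1) * (M ^ (p - 1) * M) := mul_le_mul_of_nonneg_left h1 h2
      _ = M ^ (p - 1) * M * t ^ (γ - p + 1) := mul_comm _ _

lemma integrableOn_D (hp : 1 < p) (hγ : p - 1 < γ)
    (hv : ContDiff ℝ (⊤ : ℕ∞) v) (hsv : HasCompactSupport v) :
    IntegrableOn
      (fun t => t ^ (γ - p + 1) * (p * |v t| ^ (p - 2) * v t * deriv v t)) (Ioi 0) := by
  have hp0 : (0:ℝ) < p := lt_trans one_pos hp
  obtain ⟨T, M, hT, hM, hzero, hbd⟩ := exists_bounds hv hsv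
  refine integrableOn_Ioi_of_bound (T := T) (C := p * (M ^ (p - 1) * M)) (r := γ - p + 1)
      ?_ (by linarith) ?_ ?_
  · refine Measurable.aestronglyMeasurable ?_
    apply (measurable_rpow_const' (γ - p + 1)).mul
    exact ((measurable_const.mul ((measurable_rpow_const' (p-2)).comp
      hv.continuous.abs.measurable)).mul hv.continuous.measurable).mul
      (hv.continuous_deriv (by simp)).measurable
  · intro t ht
    rw [(hzero t ht).2, mul_zero, mul_zero]
  · intro t ht
    have ht0 : (0:ℝ) < t := ht.1
    have h2 : (0:ℝ) ≤ t ^ (γ - p + 1) := Real.rpow_nonneg ht0.le _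
    have habs : |p * |v t| ^ (p - 2) * v t * deriv v t|
        = p * (|v t| ^ (p - 2) * |v t|) * |deriv v t| := by
      rw [abs_mul, abs_mul, abs_mul, abs_of_pos hp0,
        abs_of_nonneg (Real.rpow_nonneg (abs_nonneg _) _)]
      ring
    have hpow : |v t| ^ (p - 2) * |v t| = |v t| ^ (p - 1) := by
      rw [show p - 1 = (p - 2) + 1 by ring, Real.rpow_add' (abs_nonneg _) (by intro h; nlinarith),
        Real.rpow_one]
    have h1 : |p * |v t| ^ (p - 2) * v t * deriv v t| ≤ p * (M ^ (p - 1) * M) := by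
      rw [habs, hpow]
      have hv1 : |v t| ^ (p - 1) ≤ M ^ (p - 1) :=
        Real.rpow_le_rpow (abs_nonneg _) (hbd t).1 (by linarith)
      have := mul_le_mul hv1 (hbd t).2 (abs_nonneg _) (Real.rpow_nonneg hM _)
      calc p * |v t| ^ (p - 1) * |deriv v t| = p * (|v t| ^ (p - 1) * |deriv v t|) := by ring
        _ ≤ p * (M ^ (p - 1) * M) := mul_le_mul_of_nonneg_left this hp0.le
    calc |(t ^ (γ - p + 1) * (p * |v t| ^ (p - 2) * v t * deriv v t))|
        = t ^ (γ - p + 1) * |p * |v t| ^ (p - 2) * v t * deriv v t| := by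
          rw [abs_mul, abs_of_nonneg h2]
      _ ≤ t ^ (γ - p + 1) * (p * (M ^ (p - 1) * M)) := mul_le_mul_of_nonneg_left h1 h2
      _ = p * (M ^ (p - 1) * M) * t ^ (γ - p + 1) := mul_comm _ _

lemma memℒp_of_integrable_rpow {μ : Measure ℝ} {f : ℝ → ℝ} (hp : 1 < p)
    (hm : AEStronglyMeasurable f μ) (hi : Integrable (fun t => ‖f t‖ ^ p) μ) :
    MemLp f (ENNReal.ofReal p) μ := by
  have hp0 : (0:ℝ) < p := lt_trans one_pos hp
  have hq0 : ENNReal.ofReal p ≠ 0 := by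
    simp only [ne_eq, ENNReal.ofReal_eq_zero, not_le]; linarith
  have h := memLp_norm_rpow_iff (p := ENNReal.ofReal p) (q := ENNReal.ofReal p) hm hq0
    ENNReal.ofReal_ne_top
  rw [ENNReal.div_self hq0 ENNReal.ofReal_ne_top, ENNReal.toReal_ofReal hp0.le] at h
  exact h.mp (memLp_one_iff_integrable.mpr hi)

/-- The one-dimensional weighted Hardy inequality on `(0,∞)`. -/
lemma oneD (hp : 1 < p) (hγ : p - 1 < γ) (hv : ContDiff ℝ (⊤ : ℕ∞) v) (hsv : HasCompactSupport v) :
    ((γ - p + 1) / p) ^ p * ∫ t in Ioi (0:ℝ), |v t| ^ p * t ^ (γ - p)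
      ≤ ∫ t in Ioi (0:ℝ), t ^ γ * |deriv v t| ^ p := by
  have hp0 : (0:ℝ) < p := lt_trans one_pos hp
  have hc0 : (0:ℝ) < γ - p + 1 := by linarith
  set c : ℝ := γ - p + 1 with hcdef
  set A := ∫ t in Ioi (0:ℝ), |v t| ^ p * t ^ (γ - p) with hA
  set B := ∫ t in Ioi (0:ℝ), t ^ γ * |deriv v t| ^ p with hB
  set I := ∫ t in Ioi (0:ℝ), t ^ c * (|v t| ^ (p - 1) * |deriv v t|) with hI
  have hvd : ∀ t, HasDerivAt v (deriv v t) t := fun t => (hv.differentiable (by simp) t).hasDerivAt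
  set D : ℝ → ℝ := fun t => p * |v t| ^ (p - 2) * v t * deriv v t with hDdef
  have hG : ∀ t, HasDerivAt (fun s => |v s| ^ p) (D t) t := fun t =>
    (hasDerivAt_abs_rpow (v t) hp).comp t (hvd t)
  have hpow : ∀ t, |v t| ^ (p - 2) * |v t| = |v t| ^ (p - 1) := by
    intro t
    rw [show p - 1 = (p - 2) + 1 by ring,
      Real.rpow_add' (abs_nonneg _) (by intro h; linarith), Real.rpow_one]
  have hDbound : ∀ t, |D t| ≤ p * (|v t| ^ (p - 1) * |deriv v t|) := by
    intro t
    apply le_of_eq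
    calc |D t| = p * (|v t| ^ (p - 2) * |v t|) * |deriv v t| := by
          rw [hDdef, abs_mul, abs_mul, abs_mul, abs_of_pos hp0,
            abs_of_nonneg (Real.rpow_nonneg (abs_nonneg _) _)]
          ring
      _ = p * (|v t| ^ (p - 1) * |deriv v t|) := by rw [hpow]; ring
  obtain ⟨T, M, hT, hM, hzero, hbd⟩ := exists_bounds hv hsv
  set F : ℝ → ℝ := fun t => t ^ c * |v t| ^ p with hFdef
  have hFderiv : ∀ t ∈ Ioi (0:ℝ),
      HasDerivAt F (c * t ^ (c - 1) * |v t| ^ p + t ^ c * D t) t := by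
    intro t ht
    have h1 : HasDerivAt (fun s : ℝ => s ^ c) (c * t ^ (c - 1)) t :=
      Real.hasDerivAt_rpow_const (Or.inl (ne_of_gt ht))
    exact h1.mul (hG t)
  have hInt1 : IntegrableOn (fun t => c * t ^ (c - 1) * |v t| ^ p) (Ioi 0) := by
    have h := (integrableOn_L1 hp hγ hv hsv).const_mul c
    have hfe : (fun t : ℝ => c * (|v t| ^ p * t ^ (γ - p)))
        = fun t => c * t ^ (c - 1) * |v t| ^ p := by
      funext t
      rw [show c - 1 = γ - p by rw [hcdef]; ring]
      ring
    exact hfe ▸ h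
  have hIntD : IntegrableOn (fun t => t ^ c * D t) (Ioi 0) := integrableOn_D hp hγ hv hsv
  have hIntF' : IntegrableOn
      (fun t => c * t ^ (c - 1) * |v t| ^ p + t ^ c * D t) (Ioi 0) := hInt1.add hIntD
  have hFtend : Filter.Tendsto F Filter.atTop (nhds 0) := by
    apply Filter.Tendsto.congr' _ (tendsto_const_nhds (α := ℝ) (f := Filter.atTop))
    filter_upwards [Filter.eventually_gt_atTop T] with t ht
    rw [hFdef]
    simp only
    rw [(hzero t ht).1, abs_zero, Real.zero_rpow hp0.ne', mul_zero]
  have hFcont : ContinuousWithinAt F (Ici 0) 0 := by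
    apply ContinuousAt.continuousWithinAt
    have h1 : ContinuousAt (fun s : ℝ => s ^ c) 0 :=
      Real.continuousAt_rpow_const 0 c (Or.inr hc0.le)
    have h2 : ContinuousAt (fun s => |v s| ^ p) 0 :=
      (Real.continuousAt_rpow_const _ p (Or.inr hp0.le)).comp hv.continuous.abs.continuousAt
    exact h1.mul h2
  have hIBP : ∫ t in Ioi (0:ℝ), (c * t ^ (c - 1) * |v t| ^ p + t ^ c * D t) = 0 - F 0 :=
    integral_Ioi_of_hasDerivAt_of_tendsto hFcont hFderiv hIntF' hFtend
  have hF0 : F 0 = 0 := by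
    rw [hFdef]; simp only
    rw [Real.zero_rpow (ne_of_gt hc0), zero_mul]
  have hfirst : ∫ t in Ioi (0:ℝ), c * t ^ (c - 1) * |v t| ^ p = c * A := by
    rw [hA, ← integral_const_mul c]
    apply integral_congr_ae
    apply Filter.Eventually.of_forall
    intro t
    rw [show c - 1 = γ - p by rw [hcdef]; ring]
    ring
  have hsum : c * A + ∫ t in Ioi (0:ℝ), t ^ c * D t = 0 := by
    rw [← hfirst, ← integral_add hInt1 hIntD, hIBP, hF0, zero_sub, neg_zero]
  have hIint : IntegrableOn (fun t => t ^ c * (|v t| ^ (p - 1) * |deriv v t|)) (Ioi 0) :=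
    integrableOn_mid hp hγ hv hsv
  have hcA_le : c * A ≤ p * I := by
    have h0 : c * A = - ∫ t in Ioi (0:ℝ), t ^ c * D t := by linarith
    rw [h0, ← integral_neg, hI, ← integral_const_mul p]
    apply setIntegral_mono_on hIntD.neg (hIint.const_mul p) measurableSet_Ioi
    intro t ht
    have ht0 : (0:ℝ) < t := ht
    calc -(t ^ c * D t) ≤ |t ^ c * D t| := neg_le_abs _
      _ = t ^ c * |D t| := by rw [abs_mul, abs_of_nonneg (Real.rpow_nonneg ht0.le _)]
      _ ≤ t ^ c * (p * (|v t| ^ (p - 1) * |deriv v t|)) :=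
          mul_le_mul_of_nonneg_left (hDbound t) (Real.rpow_nonneg ht0.le _)
      _ = p * (t ^ c * (|v t| ^ (p - 1) * |deriv v t|)) := by ring
  -- Hölder's inequality
  set q : ℝ := p / (p - 1) with hqdef
  have hp1 : p - 1 ≠ 0 := by linarith
  have hpq : p.HolderConjugate q := Real.holderConjugate_iff.mpr ⟨hp, by rw [hqdef, inv_div]; field_simp; ring⟩
  have hq1 : 1 < q := hpq.symm.lt
  have hq0 : (0:ℝ) < q := hpq.symm.pos
  have hHolder : I ≤ B ^ (1 / p) * A ^ (1 / q) := by
    set f : ℝ → ℝ := fun t => (t ^ γ * |deriv v t| ^ p) ^ (1 / p) with hfdef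
    set g : ℝ → ℝ := fun t => (|v t| ^ p * t ^ (γ - p)) ^ (1 / q) with hgdef
    have hfm : AEStronglyMeasurable f (volume.restrict (Ioi 0)) :=
      ((measurable_rpow_const' (1/p)).comp ((measurable_rpow_const' γ).mul
        ((measurable_rpow_const' p).comp
          (hv.continuous_deriv (by simp)).abs.measurable))).aestronglyMeasurable
    have hgm : AEStronglyMeasurable g (volume.restrict (Ioi 0)) :=
      ((measurable_rpow_const' (1/q)).comp (((measurable_rpow_const' p).comp
        hv.continuous.abs.measurable).mul
          (measurable_rpow_const' (γ - p)))).aestronglyMeasurable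
    have hfnn : 0 ≤ᵐ[volume.restrict (Ioi 0)] f := by
      filter_upwards [ae_restrict_mem measurableSet_Ioi] with t ht
      exact Real.rpow_nonneg (mul_nonneg (Real.rpow_nonneg (le_of_lt ht) _)
        (Real.rpow_nonneg (abs_nonneg _) _)) _
    have hgnn : 0 ≤ᵐ[volume.restrict (Ioi 0)] g := by
      filter_upwards [ae_restrict_mem measurableSet_Ioi] with t ht
      exact Real.rpow_nonneg (mul_nonneg (Real.rpow_nonneg (abs_nonneg _) _)
        (Real.rpow_nonneg (le_of_lt ht) _)) _
    have hfp : ∀ t ∈ Ioi (0:ℝ), f t ^ p = t ^ γ * |deriv v t| ^ p := by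
      intro t ht
      rw [hfdef]
      simp only
      rw [← Real.rpow_mul (mul_nonneg (Real.rpow_nonneg (le_of_lt ht) _)
        (Real.rpow_nonneg (abs_nonneg _) _)), one_div, inv_mul_cancel₀ hp0.ne', Real.rpow_one]
    have hgq : ∀ t ∈ Ioi (0:ℝ), g t ^ q = |v t| ^ p * t ^ (γ - p) := by
      intro t ht
      rw [hgdef]
      simp only
      rw [← Real.rpow_mul (mul_nonneg (Real.rpow_nonneg (abs_nonneg _) _)
        (Real.rpow_nonneg (le_of_lt ht) _)), one_div, inv_mul_cancel₀ hq0.ne', Real.rpow_one]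
    have hMf : MemLp f (ENNReal.ofReal p) (volume.restrict (Ioi 0)) := by
      apply memℒp_of_integrable_rpow hp hfm
      refine (integrableOn_L2 hp hγ hv hsv).congr ?_
      filter_upwards [ae_restrict_mem measurableSet_Ioi, hfnn] with t ht htnn
      rw [Real.norm_eq_abs, abs_of_nonneg htnn, hfp t ht]
    have hMg : MemLp g (ENNReal.ofReal q) (volume.restrict (Ioi 0)) := by
      apply memℒp_of_integrable_rpow hq1 hgm
      refine (integrableOn_L1 hp hγ hv hsv).congr ?_
      filter_upwards [ae_restrict_mem measurableSet_Ioi, hgnn] with t ht htnn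
      rw [Real.norm_eq_abs, abs_of_nonneg htnn, hgq t ht]
    have h := integral_mul_le_Lp_mul_Lq_of_nonneg hpq hfnn hgnn hMf hMg
    have h1 : p * (1 / p) = 1 := by field_simp
    have h2 : p * (1 / q) = p - 1 := by rw [hqdef]; field_simp
    have h3 : γ * (1 / p) + (γ - p) * (1 / q) = c := by
      rw [hqdef, hcdef]; field_simp; ring
    have e1 : ∫ t in Ioi (0:ℝ), f t * g t = I := by
      rw [hI]
      apply setIntegral_congr_fun measurableSet_Ioi
      intro t ht
      have ht0 : (0:ℝ) < t := ht
      calc f t * g t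
          = t ^ (γ * (1/p)) * |deriv v t| ^ (p * (1/p))
            * (|v t| ^ (p * (1/q)) * t ^ ((γ - p) * (1/q))) := by
            rw [hfdef, hgdef]
            simp only
            rw [Real.mul_rpow (Real.rpow_nonneg ht0.le _) (Real.rpow_nonneg (abs_nonneg _) _),
              Real.mul_rpow (Real.rpow_nonneg (abs_nonneg _) _) (Real.rpow_nonneg ht0.le _),
              ← Real.rpow_mul ht0.le, ← Real.rpow_mul (abs_nonneg _),
              ← Real.rpow_mul (abs_nonneg _), ← Real.rpow_mul ht0.le]
        _ = t ^ (γ * (1/p)) * t ^ ((γ - p) * (1/q)) * (|v t| ^ (p - 1) * |deriv v t|) := by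
            rw [h1, h2, Real.rpow_one]
            ring
        _ = t ^ (γ * (1/p) + (γ - p) * (1/q)) * (|v t| ^ (p - 1) * |deriv v t|) := by
            rw [Real.rpow_add ht0]
        _ = t ^ c * (|v t| ^ (p - 1) * |deriv v t|) := by rw [h3]
    have e2 : ∫ t in Ioi (0:ℝ), f t ^ p = B := by
      rw [hB]
      exact setIntegral_congr_fun measurableSet_Ioi fun t ht => hfp t ht
    have e3 : ∫ t in Ioi (0:ℝ), g t ^ q = A := by
      rw [hA]
      exact setIntegral_congr_fun measurableSet_Ioi fun t ht => hgq t ht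
    rw [e1, e2, e3] at h
    exact h
  -- conclusion
  have hA0 : 0 ≤ A := by
    rw [hA]
    exact setIntegral_nonneg measurableSet_Ioi fun t ht =>
      mul_nonneg (Real.rpow_nonneg (abs_nonneg _) _) (Real.rpow_nonneg (le_of_lt ht) _)
  have hB0 : 0 ≤ B := by
    rw [hB]
    exact setIntegral_nonneg measurableSet_Ioi fun t ht =>
      mul_nonneg (Real.rpow_nonneg (le_of_lt ht) _) (Real.rpow_nonneg (abs_nonneg _) _)
  rcases eq_or_lt_of_le hA0 with hA0' | hApos
  · rw [← hA0', mul_zero]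
    exact hB0
  · have key : c * A ≤ p * (B ^ (1/p) * A ^ (1/q)) :=
      le_trans hcA_le (mul_le_mul_of_nonneg_left hHolder hp0.le)
    have hsplit : A = A ^ (1/p) * A ^ (1/q) := by
      rw [← Real.rpow_add hApos]
      rw [show 1/p + 1/q = 1 by
        rw [one_div, one_div]; exact hpq.inv_add_inv_eq_one]
      rw [Real.rpow_one]
    have hAq : (0:ℝ) < A ^ (1/q) := Real.rpow_pos_of_pos hApos _
    have hstep : c * A ^ (1/p) ≤ p * B ^ (1/p) := by
      have h' : (c * A ^ (1/p)) * A ^ (1/q) ≤ (p * B ^ (1/p)) * A ^ (1/q) := by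
        calc (c * A ^ (1/p)) * A ^ (1/q) = c * (A ^ (1/p) * A ^ (1/q)) := by ring
          _ = c * A := by rw [← hsplit]
          _ ≤ p * (B ^ (1/p) * A ^ (1/q)) := key
          _ = (p * B ^ (1/p)) * A ^ (1/q) := by ring
      exact le_of_mul_le_mul_right h' hAq
    have hfinal : (c / p) * A ^ (1/p) ≤ B ^ (1/p) := by
      rw [div_mul_eq_mul_div, div_le_iff₀ hp0]
      calc c * A ^ (1/p) ≤ p * B ^ (1/p) := hstep
        _ = B ^ (1/p) * p := by ring
    have hgoal : ((c/p) * A ^ (1/p)) ^ p ≤ (B ^ (1/p)) ^ p :=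
      Real.rpow_le_rpow (mul_nonneg (div_nonneg hc0.le hp0.le)
        (Real.rpow_nonneg hA0 _)) hfinal hp0.le
    have hL : ((c/p) * A ^ (1/p)) ^ p = (c/p) ^ p * A := by
      rw [Real.mul_rpow (div_nonneg hc0.le hp0.le) (Real.rpow_nonneg hA0 _),
        ← Real.rpow_mul hA0, one_div, inv_mul_cancel₀ hp0.ne', Real.rpow_one]
    have hR : (B ^ (1/p)) ^ p = B := by
      rw [← Real.rpow_mul hB0, one_div, inv_mul_cancel₀ hp0.ne', Real.rpow_one]
    calc (c/p) ^ p * A = ((c/p) * A ^ (1/p)) ^ p := hL.symm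
      _ ≤ (B ^ (1/p)) ^ p := hgoal
      _ = B := hR

end OneDim

end Aux

/-- **Singular weighted Hardy inequality on the half-space** (Corollary 3.2):
for `γ > p - 1` and every `u ∈ C_0^∞(ℝ^N)`,
`|(γ-p+1)/p|^p ∫_{ℝ^N_+} |u|^p / x_N^{p-γ} dx ≤ ∫_{ℝ^N_+} x_N^γ |∇u|^p dx`. -/
theorem hardy_singular {n : ℕ} (hn : 1 ≤ n) (p γ : ℝ) (hp : 1 < p) (hγ : p - 1 < γ)
    (u : ((Fin n → ℝ) × ℝ) → ℝ) (hu : ContDiff ℝ (⊤ : ℕ∞) u) (husupp : HasCompactSupport u) :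
    |(γ - p + 1) / p| ^ p * ∫ x in upperHalfSpace n, |u x| ^ p / x.2 ^ (p - γ)
      ≤ ∫ x in upperHalfSpace n, x.2 ^ γ * ‖fderiv ℝ u x‖ ^ p := by
  have hp0 : (0:ℝ) < p := lt_trans one_pos hp
  have hγ0 : (0:ℝ) < γ := by linarith
  have hcdiv : (0:ℝ) < (γ - p + 1) / p := div_pos (by linarith) hp0
  rw [abs_of_pos hcdiv]
  set C : ℝ := ((γ - p + 1) / p) ^ p with hCdef
  have hC0 : 0 ≤ C := Real.rpow_nonneg hcdiv.le _
  -- the set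
  have hSm : MeasurableSet (upperHalfSpace n) :=
    measurableSet_lt measurable_const measurable_snd
  have hset : upperHalfSpace n = (univ : Set (Fin n → ℝ)) ×ˢ Ioi (0:ℝ) := by
    ext x
    simp [upperHalfSpace, Set.mem_prod]
  have hrestrict : volume.restrict (upperHalfSpace n)
      = (volume : Measure (Fin n → ℝ)).prod (volume.restrict (Ioi 0)) := by
    rw [hset, Measure.volume_eq_prod, ← Measure.prod_restrict, Measure.restrict_univ]
  -- measurability of the integrands
  have hm1 : Measurable fun z : (Fin n → ℝ) × ℝ => |u z| ^ p * z.2 ^ (γ - p) :=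
    ((measurable_rpow_const' p).comp hu.continuous.abs.measurable).mul
      ((measurable_rpow_const' (γ - p)).comp measurable_snd)
  have hm2 : Measurable fun z : (Fin n → ℝ) × ℝ => z.2 ^ γ * ‖fderiv ℝ u z‖ ^ p :=
    ((measurable_rpow_const' γ).comp measurable_snd).mul
      ((measurable_rpow_const' p).comp (hu.continuous_fderiv (by simp)).norm.measurable)
  -- rewrite the left-hand integrand
  have hLeq : ∫ x in upperHalfSpace n, |u x| ^ p / x.2 ^ (p - γ)
      = ∫ x in upperHalfSpace n, |u x| ^ p * x.2 ^ (γ - p) := by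
    apply setIntegral_congr_fun hSm
    intro x hx
    have hx2 : (0:ℝ) < x.2 := hx
    show |u x| ^ p / x.2 ^ (p - γ) = |u x| ^ p * x.2 ^ (γ - p)
    rw [div_eq_mul_inv, ← Real.rpow_neg hx2.le, neg_sub]
  rw [hLeq]
  -- pass to lintegrals
  have hφnn : 0 ≤ᵐ[volume.restrict (upperHalfSpace n)]
      fun z : (Fin n → ℝ) × ℝ => |u z| ^ p * z.2 ^ (γ - p) := by
    filter_upwards [ae_restrict_mem hSm] with z hz
    exact mul_nonneg (Real.rpow_nonneg (abs_nonneg _) _)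
      (Real.rpow_nonneg (le_of_lt hz) _)
  have hψnn : 0 ≤ᵐ[volume.restrict (upperHalfSpace n)]
      fun z : (Fin n → ℝ) × ℝ => z.2 ^ γ * ‖fderiv ℝ u z‖ ^ p := by
    filter_upwards [ae_restrict_mem hSm] with z hz
    exact mul_nonneg (Real.rpow_nonneg (le_of_lt hz) _)
      (Real.rpow_nonneg (norm_nonneg _) _)
  rw [integral_eq_lintegral_of_nonneg_ae hφnn hm1.aestronglyMeasurable,
    integral_eq_lintegral_of_nonneg_ae hψnn hm2.aestronglyMeasurable]
  -- the right-hand side lintegral is finite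
  have hψcont : Continuous fun z : (Fin n → ℝ) × ℝ => z.2 ^ γ * ‖fderiv ℝ u z‖ ^ p := by
    apply Continuous.mul
    · exact continuous_snd.rpow_const fun x => Or.inr hγ0.le
    · exact ((hu.continuous_fderiv (by simp)).norm).rpow_const fun x => Or.inr hp0.le
  have hψsupp : HasCompactSupport fun z : (Fin n → ℝ) × ℝ => z.2 ^ γ * ‖fderiv ℝ u z‖ ^ p := by
    have h1 : HasCompactSupport fun z : (Fin n → ℝ) × ℝ => ‖fderiv ℝ u z‖ ^ p := by
      have := (husupp.fderiv ℝ).comp_left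
        (g := fun L : ((Fin n → ℝ) × ℝ) →L[ℝ] ℝ => ‖L‖ ^ p)
        (by simp [Real.zero_rpow hp0.ne'])
      exact this
    exact HasCompactSupport.mul_left (f := fun z : (Fin n → ℝ) × ℝ => z.2 ^ γ) h1
  have hψint : Integrable fun z : (Fin n → ℝ) × ℝ => z.2 ^ γ * ‖fderiv ℝ u z‖ ^ p :=
    hψcont.integrable_of_hasCompactSupport hψsupp
  have hfin : (∫⁻ z in upperHalfSpace n,
      ENNReal.ofReal (z.2 ^ γ * ‖fderiv ℝ u z‖ ^ p)) ≠ ⊤ := by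
    apply ne_top_of_le_ne_top _ (setLIntegral_le_lintegral _ _)
    exact hψint.lintegral_lt_top.ne
  -- the core lintegral inequality
  have hcore : ENNReal.ofReal C * ∫⁻ z in upperHalfSpace n,
        ENNReal.ofReal (|u z| ^ p * z.2 ^ (γ - p))
      ≤ ∫⁻ z in upperHalfSpace n, ENNReal.ofReal (z.2 ^ γ * ‖fderiv ℝ u z‖ ^ p) := by
    rw [hrestrict,
      lintegral_prod _ hm1.ennreal_ofReal.aemeasurable,
      lintegral_prod _ hm2.ennreal_ofReal.aemeasurable,
      ← lintegral_const_mul' _ _ ENNReal.ofReal_ne_top]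
    refine lintegral_mono fun x' => ?_
    -- one-dimensional reduction
    set v : ℝ → ℝ := fun t => u (x', t) with hvdef
    have hvsmooth : ContDiff ℝ (⊤ : ℕ∞) v := hu.comp ((contDiff_const (c := x')).prodMk contDiff_id)
    have hiso : Isometry fun t : ℝ => (x', t) := by
      intro a b
      simp [Prod.edist_eq, edist_self]
    have hvs : HasCompactSupport v := husupp.comp_isClosedEmbedding hiso.isClosedEmbedding
    have hbnd : ∀ t : ℝ, |deriv v t| ≤ ‖fderiv ℝ u (x', t)‖ := by
      intro t
      have hd : HasDerivAt v (fderiv ℝ u (x', t) (0, 1)) t :=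
        ((hu.differentiable (by simp) (x', t)).hasFDerivAt).comp_hasDerivAt t
          ((hasDerivAt_const t x').prodMk (hasDerivAt_id t))
      rw [hd.deriv]
      calc |fderiv ℝ u (x', t) (0, 1)| = ‖fderiv ℝ u (x', t) (0, 1)‖ :=
            (Real.norm_eq_abs _).symm
        _ ≤ ‖fderiv ℝ u (x', t)‖ * ‖((0 : Fin n → ℝ), (1:ℝ))‖ :=
            ContinuousLinearMap.le_opNorm _ _
        _ = ‖fderiv ℝ u (x', t)‖ := by
            rw [Prod.norm_def]
            simp
    have hint1 : IntegrableOn (fun t => |v t| ^ p * t ^ (γ - p)) (Ioi 0) :=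
      integrableOn_L1 hp hγ hvsmooth hvs
    have hint2 : IntegrableOn (fun t => t ^ γ * |deriv v t| ^ p) (Ioi 0) :=
      integrableOn_L2 hp hγ hvsmooth hvs
    have hnn1 : 0 ≤ᵐ[volume.restrict (Ioi (0:ℝ))] fun t => |v t| ^ p * t ^ (γ - p) := by
      filter_upwards [ae_restrict_mem measurableSet_Ioi] with t ht
      exact mul_nonneg (Real.rpow_nonneg (abs_nonneg _) _) (Real.rpow_nonneg (le_of_lt ht) _)
    have hnn2 : 0 ≤ᵐ[volume.restrict (Ioi (0:ℝ))] fun t => t ^ γ * |deriv v t| ^ p := by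
      filter_upwards [ae_restrict_mem measurableSet_Ioi] with t ht
      exact mul_nonneg (Real.rpow_nonneg (le_of_lt ht) _) (Real.rpow_nonneg (abs_nonneg _) _)
    calc ENNReal.ofReal C * ∫⁻ t in Ioi (0:ℝ),
          ENNReal.ofReal (|u (x', t)| ^ p * (x', t).2 ^ (γ - p))
        = ENNReal.ofReal C
            * ENNReal.ofReal (∫ t in Ioi (0:ℝ), |v t| ^ p * t ^ (γ - p)) := by
          rw [ofReal_integral_eq_lintegral_ofReal hint1 hnn1]
      _ = ENNReal.ofReal (C * ∫ t in Ioi (0:ℝ), |v t| ^ p * t ^ (γ - p)) :=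
          (ENNReal.ofReal_mul hC0).symm
      _ ≤ ENNReal.ofReal (∫ t in Ioi (0:ℝ), t ^ γ * |deriv v t| ^ p) :=
          ENNReal.ofReal_le_ofReal (oneD hp hγ hvsmooth hvs)
      _ = ∫⁻ t in Ioi (0:ℝ), ENNReal.ofReal (t ^ γ * |deriv v t| ^ p) :=
          ofReal_integral_eq_lintegral_ofReal hint2 hnn2
      _ ≤ ∫⁻ t in Ioi (0:ℝ), ENNReal.ofReal ((x', t).2 ^ γ * ‖fderiv ℝ u (x', t)‖ ^ p) := by
          refine lintegral_mono_ae ?_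
          filter_upwards [ae_restrict_mem measurableSet_Ioi] with t ht
          apply ENNReal.ofReal_le_ofReal
          apply mul_le_mul_of_nonneg_left _ (Real.rpow_nonneg (le_of_lt ht) _)
          exact Real.rpow_le_rpow (abs_nonneg _) (hbnd t) hp0.le
  -- conclusion
  calc C * (∫⁻ z in upperHalfSpace n,
        ENNReal.ofReal (|u z| ^ p * z.2 ^ (γ - p))).toReal
      = (ENNReal.ofReal C * ∫⁻ z in upperHalfSpace n,
          ENNReal.ofReal (|u z| ^ p * z.2 ^ (γ - p))).toReal := by
        rw [ENNReal.toReal_mul, ENNReal.toReal_ofReal hC0]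
    _ ≤ (∫⁻ z in upperHalfSpace n,
          ENNReal.ofReal (z.2 ^ γ * ‖fderiv ℝ u z‖ ^ p)).toReal :=
        ENNReal.toReal_mono hfin hcore
end
end
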